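/- Let p > 2, q = p/(p−1), δ > 0, and let Q be the Nazarov–Treil function Q(ζ,η) = |ζ|^p + |η|^q + δ·(|ζ|²|η|^{2−q} if |ζ|^p ≤ |η|^q, and (2/p)|ζ|^p + (2/q − 1)|η|^q if |ζ|^p ≥ |η|^q), for (ζ,η) ∈ ℝ²×ℝ². Then Q is C¹ on ℝ⁴. -/

import Mathlib

/-!
Write `Q = ‖ζ‖ ^ p + ‖η‖ ^ q + δ Φ`; the first two terms are `C¹` because `p, q > 1`. The
correction `Φ` is `Φ₁ = ‖ζ‖² ‖η‖ ^ (2 - q)` on the closed region `‖ζ‖ ^ p ≤ ‖η‖ ^ q` and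
`Φ₂ = (2/p) ‖ζ‖ ^ p + (2/q - 1) ‖η‖ ^ q` on the closed region `‖η‖ ^ q ≤ ‖ζ‖ ^ p`. Since
`p q = p + q`, the interface is `‖ζ‖ = ‖η‖ ^ (q - 1)`, and there `Φ₁`, `Φ₂` and their
derivatives coincide. `Φ₂` is `C¹` everywhere and `Φ₁` away from `η = 0`; in its region the only
such point is the origin, where `Φ₁ = O(‖w‖ ^ (4 - q))` and the `η`-gradient of `Φ₁` is dominated
by that of `Φ₂`, because `‖ζ‖² ‖η‖ ^ (-q) ≤ ‖η‖ ^ (q - 2)` in the region.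
-/

/-- The Nazarov–Treil Bellman function on `ℝ² × ℝ²`. -/
noncomputable def NTQ (p q δ : ℝ)
    (w : EuclideanSpace ℝ (Fin 2) × EuclideanSpace ℝ (Fin 2)) : ℝ :=
  ‖w.1‖ ^ p + ‖w.2‖ ^ q +
    δ * (if ‖w.1‖ ^ p ≤ ‖w.2‖ ^ q then ‖w.1‖ ^ (2 : ℝ) * ‖w.2‖ ^ (2 - q)
      else (2 / p) * ‖w.1‖ ^ p + (2 / q - 1) * ‖w.2‖ ^ q)

open Real Set Filter Topology Asymptotics ContinuousLinearMap

theorem tendsto_norm_rpow_nhds_zero {E : Type*} [NormedAddCommGroup E] {r : ℝ} (hr : 0 < r) :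
    Tendsto (fun x : E ↦ ‖x‖ ^ r) (𝓝 0) (𝓝 0) := by
  simpa [zero_rpow hr.ne'] using
    (continuous_norm.rpow_const (p := r) fun _ ↦ .inr hr.le).tendsto (0 : E)

section Calculus

variable {E F : Type*} [NormedAddCommGroup E] [NormedSpace ℝ E]
  [NormedAddCommGroup F] [NormedSpace ℝ F]

theorem hasFDerivAt_zero_of_norm_le_rpow {f : E → F} {r : ℝ} (hr : 1 < r)
    (hf : ∀ x, ‖f x‖ ≤ ‖x‖ ^ r) : HasFDerivAt f (0 : E →L[ℝ] F) 0 := by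
  have hf₀ : f 0 = 0 := by simpa [zero_rpow (by linarith : r ≠ 0)] using hf 0
  have hsplit : (fun x : E ↦ ‖x‖ ^ r) = fun x ↦ ‖x‖ ^ (r - 1) * ‖x‖ := by
    ext x
    rw [← rpow_add_one' (norm_nonneg x) (by linarith), sub_add_cancel]
  have ho : (fun x : E ↦ ‖x‖ ^ r) =o[𝓝 0] fun x ↦ x := by
    rw [hsplit]
    refine (((isLittleO_one_iff ℝ).2 (tendsto_norm_rpow_nhds_zero (by linarith))).mul_isBigO
      (isBigO_refl _ _)).trans_isBigO ?_
    simpa using isBigO_norm_left.2 (isBigO_refl (fun x : E ↦ x) _)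
  refine HasFDerivAt.of_isLittleO ?_
  simpa [hf₀] using (isBigO_of_le _ fun x ↦ (hf x).trans (le_abs_self _)).trans_isLittleO ho

theorem HasFDerivWithinAt.of_isClosed_of_eqOn {f g : E → F} {D : E → E →L[ℝ] F} {s : Set E}
    (hs : IsClosed s) (hfg : EqOn f g s) (hg : ∀ x ∈ s, HasFDerivAt g (D x) x) (x : E) :
    HasFDerivWithinAt f (D x) s x := by
  by_cases hx : x ∈ s
  · exact (hg x hx).hasFDerivWithinAt.congr hfg (hfg hx)
  · exact .of_notMem_closure (by rwa [hs.closure_eq])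

theorem contDiff_one_of_isClosed_cover {f g₁ g₂ : E → F} {D₁ D₂ : E → E →L[ℝ] F}
    {s t : Set E} (hs : IsClosed s) (ht : IsClosed t) (hst : s ∪ t = univ)
    (hf₁ : EqOn f g₁ s) (hf₂ : EqOn f g₂ t)
    (hg₁ : ∀ x ∈ s, HasFDerivAt g₁ (D₁ x) x) (hg₂ : ∀ x ∈ t, HasFDerivAt g₂ (D₂ x) x)
    (hD : EqOn D₁ D₂ (s ∩ t)) (hD₁ : ContinuousOn D₁ s) (hD₂ : ContinuousOn D₂ t) :
    ContDiff ℝ 1 f := by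
  classical
  set D := s.piecewise D₁ D₂
  have hDs : EqOn D D₁ s := s.piecewise_eqOn D₁ D₂
  have hDt : EqOn D D₂ t := fun x hxt ↦ by
    by_cases hxs : x ∈ s
    · rw [hDs hxs, hD ⟨hxs, hxt⟩]
    · exact s.piecewise_eq_of_notMem D₁ D₂ hxs
  refine contDiff_one_iff_hasFDerivAt.2 ⟨D, ?_, fun x ↦ ?_⟩
  · rw [← continuousOn_univ, ← hst]
    exact (hD₁.congr hDs).union_of_isClosed (hD₂.congr hDt) hs ht
  · rw [← hasFDerivWithinAt_univ, ← hst]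
    exact (HasFDerivWithinAt.of_isClosed_of_eqOn hs hf₁ (fun y hy ↦ hDs hy ▸ hg₁ y hy) x).union
      (HasFDerivWithinAt.of_isClosed_of_eqOn ht hf₂ (fun y hy ↦ hDt hy ▸ hg₂ y hy) x)

end Calculus

section NormRpow

variable {E : Type*} [NormedAddCommGroup E] [InnerProductSpace ℝ E]

theorem hasFDerivAt_norm_rpow_of_ne_zero {x : E} (hx : x ≠ 0) (r : ℝ) :
    HasFDerivAt (fun x : E ↦ ‖x‖ ^ r) ((r * ‖x‖ ^ (r - 2)) • innerSL ℝ x) x := by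
  apply HasStrictFDerivAt.hasFDerivAt
  convert! (hasStrictFDerivAt_norm_sq x).rpow_const (p := r / 2) (by simp [hx]) using 0
  simp_rw [← rpow_natCast_mul (norm_nonneg _), ← Nat.cast_smul_eq_nsmul ℝ, smul_smul]
  ring_nf

theorem continuous_norm_rpow_smul {r : ℝ} (hr : -1 < r) :
    Continuous fun x : E ↦ ‖x‖ ^ r • x := by
  refine continuous_iff_continuousAt.2 fun x ↦ ?_
  rcases eq_or_ne x 0 with rfl | hx
  · rw [ContinuousAt, smul_zero]
    refine tendsto_zero_iff_norm_tendsto_zero.2 ?_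
    simpa [norm_smul, abs_rpow_of_nonneg (norm_nonneg _),
      ← rpow_add_one' (norm_nonneg _) (by linarith : r + 1 ≠ 0)] using
      tendsto_norm_rpow_nhds_zero (E := E) (by linarith : 0 < r + 1)
  · exact (continuous_norm.continuousAt.rpow_const (.inl (norm_ne_zero_iff.2 hx))).smul
      continuousAt_id

end NormRpow

namespace Real.HolderConjugate

variable {p q s t : ℝ} (hpq : p.HolderConjugate q) (hs : 0 ≤ s) (ht : 0 ≤ t)
include hpq hs ht

theorem rpow_le_rpow_iff_le_rpow_sub_one : s ^ p ≤ t ^ q ↔ s ≤ t ^ (q - 1) := by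
  rw [← rpow_le_rpow_iff hs (rpow_nonneg ht _) hpq.pos, ← rpow_mul ht,
    hpq.symm.sub_one_mul_conj]

theorem rpow_eq_rpow_iff_eq_rpow_sub_one : s ^ p = t ^ q ↔ s = t ^ (q - 1) := by
  rw [← rpow_left_inj hs (rpow_nonneg ht _) hpq.ne_zero, ← rpow_mul ht,
    hpq.symm.sub_one_mul_conj]

theorem rpow_sub_two_eq_of_rpow_eq (h : s ^ p = t ^ q) : s ^ (p - 2) = t ^ (2 - q) := by
  rw [(hpq.rpow_eq_rpow_iff_eq_rpow_sub_one hs ht).1 h, ← rpow_mul ht]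
  congr 1
  linear_combination hpq.symm.sub_one_mul_conj

theorem rpow_two_mul_rpow_neg_eq_of_rpow_eq (hq : q ≠ 2) (h : s ^ p = t ^ q) :
    s ^ (2 : ℝ) * t ^ (-q) = t ^ (q - 2) := by
  rw [(hpq.rpow_eq_rpow_iff_eq_rpow_sub_one hs ht).1 h, ← rpow_mul ht,
    ← rpow_add' ht (by contrapose! hq; linarith)]
  ring_nf

theorem rpow_two_mul_rpow_neg_le_of_rpow_le (hq : q ≠ 2) (h : s ^ p ≤ t ^ q) :
    s ^ (2 : ℝ) * t ^ (-q) ≤ t ^ (q - 2) := by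
  rw [hpq.rpow_le_rpow_iff_le_rpow_sub_one hs ht] at h
  calc s ^ (2 : ℝ) * t ^ (-q) ≤ (t ^ (q - 1)) ^ (2 : ℝ) * t ^ (-q) := by gcongr
    _ = t ^ (q - 2) := by
      rw [← rpow_mul ht, ← rpow_add' ht (by contrapose! hq; linarith)]
      ring_nf

theorem rpow_two_mul_rpow_two_sub_eq_of_rpow_eq (h : s ^ p = t ^ q) :
    s ^ (2 : ℝ) * t ^ (2 - q) = 2 / p * s ^ p + (2 / q - 1) * t ^ q := by
  have hts : t ^ q = s ^ (2 : ℝ) * t ^ (2 - q) := by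
    rw [(hpq.rpow_eq_rpow_iff_eq_rpow_sub_one hs ht).1 h, ← rpow_mul ht,
      ← rpow_add' ht (by ring_nf; exact hpq.symm.ne_zero)]
    ring_nf
  have hcoef : 2 / p + (2 / q - 1) = 1 := by
    linear_combination 2 * hpq.inv_add_inv_eq_one
  rw [h, ← hts, ← add_mul, hcoef, one_mul]

end Real.HolderConjugate

noncomputable section

variable {E F : Type*} [NormedAddCommGroup E] [NormedAddCommGroup F]

section InnerCoprod

variable [InnerProductSpace ℝ E] [InnerProductSpace ℝ F]

def innerCoprod (u : E) (v : F) : E × F →L[ℝ] ℝ :=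
  (innerSL ℝ u).comp (fst ℝ E F) + (innerSL ℝ v).comp (snd ℝ E F)

theorem innerCoprod_apply (u : E) (v : F) (w : E × F) :
    innerCoprod u v w = inner ℝ u w.1 + inner ℝ v w.2 := by
  simp [innerCoprod]

theorem ContinuousOn.innerCoprod {X : Type*} [TopologicalSpace X] {u : X → E} {v : X → F}
    {s : Set X} (hu : ContinuousOn u s) (hv : ContinuousOn v s) :
    ContinuousOn (fun x ↦ innerCoprod (u x) (v x)) s :=
  (((innerSL ℝ).continuous.comp_continuousOn hu).clm_comp continuousOn_const).add
    (((innerSL ℝ).continuous.comp_continuousOn hv).clm_comp continuousOn_const)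

end InnerCoprod

namespace NazarovTreil

def correction₁ (q : ℝ) (w : E × F) : ℝ := ‖w.1‖ ^ (2 : ℝ) * ‖w.2‖ ^ (2 - q)

def correction₂ (p q : ℝ) (w : E × F) : ℝ := 2 / p * ‖w.1‖ ^ p + (2 / q - 1) * ‖w.2‖ ^ q

def correction (p q : ℝ) (w : E × F) : ℝ :=
  if ‖w.1‖ ^ p ≤ ‖w.2‖ ^ q then correction₁ q w else correction₂ p q w

variable {p q : ℝ}

theorem eq_zero_of_norm_rpow_le (hp : p ≠ 0) (hq : q ≠ 0) {w : E × F}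
    (hw : ‖w.1‖ ^ p ≤ ‖w.2‖ ^ q) (h : w.2 = 0) : w = 0 := by
  have h₁ : ‖w.1‖ ^ p = 0 :=
    le_antisymm (by simpa [h, zero_rpow hq] using hw) (rpow_nonneg (norm_nonneg _) _)
  rw [rpow_eq_zero (norm_nonneg _) hp, norm_eq_zero] at h₁
  exact Prod.ext h₁ h

theorem correction_eqOn_correction₂ (hpq : p.HolderConjugate q) :
    EqOn (correction p q) (correction₂ p q) {w : E × F | ‖w.2‖ ^ q ≤ ‖w.1‖ ^ p} := by
  intro w hw
  rw [correction]
  split_ifs with h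
  · exact hpq.rpow_two_mul_rpow_two_sub_eq_of_rpow_eq (norm_nonneg _) (norm_nonneg _)
      (le_antisymm h hw)
  · rfl

variable [InnerProductSpace ℝ E] [InnerProductSpace ℝ F]

def correctionDeriv₁ (q : ℝ) (w : E × F) : E × F →L[ℝ] ℝ :=
  innerCoprod ((2 * ‖w.2‖ ^ (2 - q)) • w.1) (((2 - q) * (‖w.1‖ ^ (2 : ℝ) * ‖w.2‖ ^ (-q))) • w.2)

def correctionDeriv₂ (p q : ℝ) (w : E × F) : E × F →L[ℝ] ℝ :=
  innerCoprod ((2 * ‖w.1‖ ^ (p - 2)) • w.1) (((2 - q) * ‖w.2‖ ^ (q - 2)) • w.2)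

theorem hasFDerivAt_correction₂ (hp : 1 < p) (hq : 1 < q) (w : E × F) :
    HasFDerivAt (correction₂ p q) (correctionDeriv₂ p q w) w := by
  have h₁ := (hasFDerivAt_norm_rpow w.1 hp).comp w hasFDerivAt_fst
  have h₂ := (hasFDerivAt_norm_rpow w.2 hq).comp w hasFDerivAt_snd
  refine ((h₁.const_mul (2 / p)).add (h₂.const_mul (2 / q - 1))).congr_fderiv ?_
  apply ContinuousLinearMap.ext
  rintro ⟨u, v⟩
  simp [correctionDeriv₂, innerCoprod_apply, real_inner_smul_left]
  field_simp

theorem hasFDerivAt_correction₁_of_ne_zero {w : E × F} (hw : w.2 ≠ 0) :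
    HasFDerivAt (correction₁ q) (correctionDeriv₁ q w) w := by
  have h₁ := (hasFDerivAt_norm_rpow w.1 one_lt_two).comp w hasFDerivAt_fst
  have h₂ := (hasFDerivAt_norm_rpow_of_ne_zero hw (2 - q)).comp w hasFDerivAt_snd
  refine (h₁.mul h₂).congr_fderiv ?_
  apply ContinuousLinearMap.ext
  rintro ⟨u, v⟩
  simp [correctionDeriv₁, innerCoprod_apply, real_inner_smul_left]
  ring

theorem hasFDerivAt_correction₁_zero (hq : q ≤ 2) :
    HasFDerivAt (correction₁ q) (correctionDeriv₁ q (0 : E × F)) 0 := by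
  have h₀ : correctionDeriv₁ q (0 : E × F) = 0 := by
    apply ContinuousLinearMap.ext
    rintro ⟨u, v⟩
    simp [correctionDeriv₁, innerCoprod_apply]
  rw [h₀]
  refine hasFDerivAt_zero_of_norm_le_rpow (r := 2 + (2 - q)) (by linarith) fun w ↦ ?_
  rw [correction₁, Real.norm_of_nonneg (by positivity), rpow_add' (norm_nonneg _) (by linarith)]
  exact mul_le_mul (rpow_le_rpow (norm_nonneg _) (norm_fst_le w) zero_le_two)
    (rpow_le_rpow (norm_nonneg _) (norm_snd_le w) (by linarith)) (by positivity) (by positivity)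

theorem hasFDerivAt_correction₁ (hp : 0 < p) (hq₀ : 0 < q) (hq : q ≤ 2) {w : E × F}
    (hw : ‖w.1‖ ^ p ≤ ‖w.2‖ ^ q) : HasFDerivAt (correction₁ q) (correctionDeriv₁ q w) w := by
  rcases eq_or_ne w.2 0 with h | h
  · obtain rfl := eq_zero_of_norm_rpow_le hp.ne' hq₀.ne' hw h
    exact hasFDerivAt_correction₁_zero hq
  · exact hasFDerivAt_correction₁_of_ne_zero h

theorem correctionDeriv₁_eq_correctionDeriv₂ (hpq : p.HolderConjugate q) (hq : q ≠ 2)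
    {w : E × F} (hw : ‖w.1‖ ^ p = ‖w.2‖ ^ q) : correctionDeriv₁ q w = correctionDeriv₂ p q w := by
  rw [correctionDeriv₁, correctionDeriv₂,
    hpq.rpow_two_mul_rpow_neg_eq_of_rpow_eq (norm_nonneg _) (norm_nonneg _) hq hw,
    hpq.rpow_sub_two_eq_of_rpow_eq (norm_nonneg _) (norm_nonneg _) hw]

theorem continuous_correctionDeriv₂ (hp : 1 < p) (hq : 1 < q) :
    Continuous (correctionDeriv₂ p q : E × F → E × F →L[ℝ] ℝ) := by
  rw [← continuousOn_univ]
  unfold correctionDeriv₂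
  simp_rw [mul_smul]
  exact ContinuousOn.innerCoprod
    (((continuous_norm_rpow_smul (by linarith)).comp continuous_fst).const_smul _).continuousOn
    (((continuous_norm_rpow_smul (by linarith)).comp continuous_snd).const_smul _).continuousOn

theorem continuousOn_correctionDeriv₁ (hpq : p.HolderConjugate q) (hq : q < 2) :
    ContinuousOn (correctionDeriv₁ q) {w : E × F | ‖w.1‖ ^ p ≤ ‖w.2‖ ^ q} := by
  refine ContinuousOn.innerCoprod (Continuous.continuousOn ?_) fun w hw ↦ ?_
  · exact (continuous_const.mul ((continuous_norm.comp continuous_snd).rpow_const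
      fun _ ↦ .inr (by linarith))).smul continuous_fst
  rcases eq_or_ne w.2 0 with h | h
  · obtain rfl := eq_zero_of_norm_rpow_le hpq.pos.ne' hpq.symm.pos.ne' hw h
    have hdom : ∀ y ∈ {w : E × F | ‖w.1‖ ^ p ≤ ‖w.2‖ ^ q},
        ‖((2 - q) * (‖y.1‖ ^ (2 : ℝ) * ‖y.2‖ ^ (-q))) • y.2‖
          ≤ (2 - q) * ‖‖y.2‖ ^ (q - 2) • y.2‖ := fun y hy ↦ by
      rw [norm_smul, norm_smul, Real.norm_of_nonneg (mul_nonneg (by linarith) (by positivity)),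
        Real.norm_of_nonneg (by positivity), mul_assoc]
      gcongr
      exact hpq.rpow_two_mul_rpow_neg_le_of_rpow_le (norm_nonneg _) (norm_nonneg _) hq.ne hy
    have hlim : Tendsto (fun y : E × F ↦ (2 - q) * ‖‖y.2‖ ^ (q - 2) • y.2‖) (𝓝 0) (𝓝 0) := by
      simpa using ((((continuous_norm_rpow_smul (by linarith [hpq.symm.lt])).comp
        continuous_snd).norm.const_mul (2 - q)).tendsto (0 : E × F))
    simpa [ContinuousWithinAt] using
      squeeze_zero_norm' (eventually_nhdsWithin_of_forall hdom) (hlim.mono_left nhdsWithin_le_nhds)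
  · refine ContinuousAt.continuousWithinAt ?_
    exact (continuousAt_const.mul (((continuous_norm.comp continuous_fst).rpow_const
      fun _ ↦ .inr zero_le_two).continuousAt.mul ((continuous_norm.comp
        continuous_snd).continuousAt.rpow_const (.inl (norm_ne_zero_iff.2 h))))).smul
      continuousAt_snd

theorem contDiff_correction (hpq : p.HolderConjugate q) (hp : 2 < p) :
    ContDiff ℝ 1 (correction p q : E × F → ℝ) := by
  have hq : q < 2 := by nlinarith [hpq.sub_one_mul_conj]
  have hR₁ : IsClosed {w : E × F | ‖w.1‖ ^ p ≤ ‖w.2‖ ^ q} := isClosed_le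
    ((continuous_norm.comp continuous_fst).rpow_const fun _ ↦ .inr hpq.pos.le)
    ((continuous_norm.comp continuous_snd).rpow_const fun _ ↦ .inr hpq.symm.pos.le)
  have hR₂ : IsClosed {w : E × F | ‖w.2‖ ^ q ≤ ‖w.1‖ ^ p} := isClosed_le
    ((continuous_norm.comp continuous_snd).rpow_const fun _ ↦ .inr hpq.symm.pos.le)
    ((continuous_norm.comp continuous_fst).rpow_const fun _ ↦ .inr hpq.pos.le)
  refine contDiff_one_of_isClosed_cover hR₁ hR₂ (by ext; simp [le_total])
    (fun w hw ↦ if_pos hw) (correction_eqOn_correction₂ hpq)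
    (fun w ↦ hasFDerivAt_correction₁ hpq.pos hpq.symm.pos hq.le)
    (fun w _ ↦ hasFDerivAt_correction₂ hpq.lt hpq.symm.lt w)
    (fun w hw ↦ correctionDeriv₁_eq_correctionDeriv₂ hpq hq.ne (le_antisymm hw.1 hw.2))
    (continuousOn_correctionDeriv₁ hpq hq)
    (continuous_correctionDeriv₂ hpq.lt hpq.symm.lt).continuousOn

end NazarovTreil

end

theorem stmt16_general (p q δ : ℝ) (hp : 2 < p) (hq : q = p / (p - 1)) :
    ContDiff ℝ 1 (NTQ p q δ) := by
  have hpq : p.HolderConjugate q := (holderConjugate_iff_eq_conjExponent (by linarith)).2 hq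
  have hNTQ : NTQ p q δ = fun w ↦ ‖w.1‖ ^ p + ‖w.2‖ ^ q + δ * NazarovTreil.correction p q w :=
    rfl
  rw [hNTQ]
  exact (((contDiff_norm_rpow hpq.lt).comp contDiff_fst).add
    ((contDiff_norm_rpow hpq.symm.lt).comp contDiff_snd)).add
    (contDiff_const.mul (NazarovTreil.contDiff_correction hpq hp))

/-- the Nazarov–Treil function `Q` is `C¹` on `ℝ⁴`. -/
theorem stmt16 (p q δ : ℝ) (hp : 2 < p) (hq : q = p / (p - 1)) (hδ : 0 < δ) :
    ContDiff ℝ 1 (NTQ p q δ) :=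
  stmt16_general p q δ hp hq
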